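/- Let ρ ≥ √2 + 1 be real. (a) For every real α ≥ 0 and every β ∈ ℂ with |α + β| ≤ 1 and |α − β| ≤ 1, one has D(ρ + α, β) := min{ 2|β|, √2·|(ρ+α) − β|, √2·|(ρ+α) + β|, √2·|(ρ+α) − iβ|, √2·|(ρ+α) + iβ|, 2(ρ+α) } ≤ 2. (b) For α = 0 and β = e^{iθ} with any θ ∈ [−π, 0], D(ρ, e^{iθ}) = 2. Consequently 2 is the greatest element of { D(ρ + α, β) : α ≥ 0, |α + β| ≤ 1, |α − β| ≤ 1 }. -/

import Mathlib

/-
The distance 2‖β‖ between the two points of the constellation with the same symbol s caps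
D(ξ, β) at 2‖β‖, and the constraints ‖α ± β‖ ≤ 1 force ‖β‖ ≤ 1, so D ≤ 2 everywhere.
Conversely, for ‖β‖ = 1 every other distance √2‖ρ ± β‖, √2‖ρ ± iβ‖ is at least √2(ρ - 1) ≥ 2
by the reverse triangle inequality, and 2ρ ≥ 2, so D(ρ, β) = 2 on the whole unit circle.
-/

open Real Complex

/-- The minimum pairwise Euclidean distance of the 8-point composite constellation. -/
noncomputable def Dmin (ξ : ℝ) (β : ℂ) : ℝ :=
  min (min (min (2 * ‖β‖) (Real.sqrt 2 * ‖((ξ : ℝ) - β)‖))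
        (min (Real.sqrt 2 * ‖((ξ : ℝ) + β)‖)
          (Real.sqrt 2 * ‖((ξ : ℝ) - Complex.I * β)‖)))
      (min (Real.sqrt 2 * ‖((ξ : ℝ) + Complex.I * β)‖) (2 * ξ))

theorem norm_le_one_of_norm_add_le_one_of_norm_sub_le_one {E : Type*}
    [SeminormedAddCommGroup E] [NormedSpace ℝ E] {a b : E}
    (h₁ : ‖a + b‖ ≤ 1) (h₂ : ‖a - b‖ ≤ 1) : ‖b‖ ≤ 1 := by
  have h : (2 : ℝ) • b = (a + b) - (a - b) := by rw [two_smul]; abel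
  have : 2 * ‖b‖ ≤ 2 :=
    calc 2 * ‖b‖ = ‖(a + b) - (a - b)‖ := by rw [← h, norm_smul, Real.norm_two]
      _ ≤ ‖a + b‖ + ‖a - b‖ := norm_sub_le _ _
      _ ≤ 2 := by linarith
  linarith

theorem Dmin_le_two_mul_norm (ξ : ℝ) (β : ℂ) : Dmin ξ β ≤ 2 * ‖β‖ :=
  (min_le_left _ _).trans <| (min_le_left _ _).trans (min_le_left _ _)

theorem two_le_sqrt_two_mul_norm_ofReal_add {ρ : ℝ} (hρ : √2 + 1 ≤ ρ) {c : ℂ} (hc : ‖c‖ = 1) :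
    2 ≤ √2 * ‖(ρ : ℂ) + c‖ := by
  have hρc : √2 ≤ ‖(ρ : ℂ) + c‖ :=
    calc √2 ≤ ‖(ρ : ℂ)‖ - ‖c‖ := by
          rw [Complex.norm_real, Real.norm_of_nonneg (by linarith [Real.sqrt_nonneg 2]), hc]
          linarith
      _ ≤ ‖(ρ : ℂ) + c‖ := norm_sub_le_norm_add _ _
  calc (2 : ℝ) = √2 * √2 := (Real.mul_self_sqrt zero_le_two).symm
    _ ≤ √2 * ‖(ρ : ℂ) + c‖ := by gcongr

theorem Dmin_eq_two_of_norm_eq_one {ρ : ℝ} (hρ : √2 + 1 ≤ ρ) {β : ℂ} (hβ : ‖β‖ = 1) :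
    Dmin ρ β = 2 := by
  have hIβ : ‖I * β‖ = 1 := by rw [norm_mul, Complex.norm_I, hβ, one_mul]
  have hsub := two_le_sqrt_two_mul_norm_ofReal_add hρ (c := -β) (by rw [norm_neg, hβ])
  have hadd := two_le_sqrt_two_mul_norm_ofReal_add hρ hβ
  have hIsub := two_le_sqrt_two_mul_norm_ofReal_add hρ (c := -(I * β)) (by rw [norm_neg, hIβ])
  have hIadd := two_le_sqrt_two_mul_norm_ofReal_add hρ hIβ
  rw [← sub_eq_add_neg] at hsub hIsub
  have hρ₂ : 2 ≤ 2 * ρ := by linarith [Real.sqrt_nonneg 2]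
  refine le_antisymm (by simpa [hβ] using Dmin_le_two_mul_norm ρ β) ?_
  unfold Dmin
  rw [hβ, mul_one]
  exact le_min (le_min (le_min le_rfl hsub) (le_min hadd hIsub)) (le_min hIadd hρ₂)

theorem stmt_15 (ρ : ℝ) (hρ : Real.sqrt 2 + 1 ≤ ρ) :
    (∀ α : ℝ, 0 ≤ α → ∀ β : ℂ, ‖((α : ℝ) + β)‖ ≤ 1 →
      ‖((α : ℝ) - β)‖ ≤ 1 → Dmin (ρ + α) β ≤ 2) ∧
    (∀ θ : ℝ, θ ∈ Set.Icc (-π) 0 → Dmin ρ (Complex.exp ((θ : ℂ) * Complex.I)) = 2) ∧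
    IsGreatest {d : ℝ | ∃ α : ℝ, ∃ β : ℂ, 0 ≤ α ∧ ‖((α : ℝ) + β)‖ ≤ 1 ∧
      ‖((α : ℝ) - β)‖ ≤ 1 ∧ d = Dmin (ρ + α) β} 2 := by
  have upper : ∀ α : ℝ, 0 ≤ α → ∀ β : ℂ, ‖((α : ℝ) + β)‖ ≤ 1 →
      ‖((α : ℝ) - β)‖ ≤ 1 → Dmin (ρ + α) β ≤ 2 := fun α _ β h₁ h₂ => by
    linarith [Dmin_le_two_mul_norm (ρ + α) β,
      norm_le_one_of_norm_add_le_one_of_norm_sub_le_one h₁ h₂]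
  refine ⟨upper, fun θ _ => Dmin_eq_two_of_norm_eq_one hρ (norm_exp_ofReal_mul_I θ), ?_, ?_⟩
  · refine ⟨0, 1, le_rfl, by norm_num, by norm_num, ?_⟩
    rw [add_zero, Dmin_eq_two_of_norm_eq_one hρ norm_one]
  · rintro d ⟨α, β, hα, h₁, h₂, rfl⟩
    exact upper α hα β h₁ h₂
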